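/- Let G be a finite strategic game in which every Nash equilibrium payoff profile equals the minmax payoff profile, and suppose that in every Nash equilibrium of G the strategy of player i has Shannon entropy at least βᵢ. Then in every Nash equilibrium of the n-stage repeated game of G, the strategy of player i has Shannon entropy (as defined for repeated-game strategies) at least n·βᵢ. -/
import Mathlib


/-- A mixed strategy over a finite action set. -/
def IsMixed {α : Type} [Fintype α] (σ : α → ℝ) : Prop :=
  (∀ a, 0 ≤ σ a) ∧ ∑ a, σ a = 1

/-- The pure (point-mass) strategy on action `a`. -/
def pureS {α : Type} [DecidableEq α] (a : α) : α → ℝ := fun b => if b = a then 1 else 0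

variable {N : Type} [Fintype N] [DecidableEq N] {A : N → Type}
  [∀ i, Fintype (A i)] [∀ i, DecidableEq (A i)] [∀ i, Nonempty (A i)]

/-- Expected utility of a utility function under an independent mixed strategy profile. -/
def expU (u : (∀ i, A i) → ℝ) (σ : ∀ i, A i → ℝ) : ℝ :=
  ∑ a : ∀ i, A i, (∏ i, σ i (a i)) * u a

/-- Nash equilibrium of the finite strategic game with utilities `u`. -/
def IsNash (u : N → (∀ i, A i) → ℝ) (σ : ∀ i, A i → ℝ) : Prop :=
  (∀ i, IsMixed (σ i)) ∧
  ∀ i (τ : A i → ℝ), IsMixed τ → expU (u i) (Function.update σ i τ) ≤ expU (u i) σ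

/-- `vi` is the minmax payoff of player `i`: the least payoff the other players can
force on player `i` (who best-responds with a pure action). -/
def IsMinmaxVal (u : N → (∀ i, A i) → ℝ) (i : N) (vi : ℝ) : Prop :=
  IsLeast {x : ℝ | ∃ σ : ∀ j, A j → ℝ, (∀ j, IsMixed (σ j)) ∧
    x = Finset.univ.sup' Finset.univ_nonempty
          (fun a : A i => expU (u i) (Function.update σ i (pureS a)))} vi

/-- Probability that, starting from history `h`, the play under behavioral profile `σ`
follows exactly the sequence of action profiles `l`. -/
def histProb (σ : ∀ i, List (∀ j, A j) → A i → ℝ) :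
    List (∀ i, A i) → List (∀ i, A i) → ℝ
  | _, [] => 1
  | h, a :: rest => (∏ i, σ i h (a i)) * histProb σ (h ++ [a]) rest

/-- Expected average payoff of player `i` in the `n`-stage repeated game. -/
noncomputable def avgPay (n : ℕ) (u : N → (∀ i, A i) → ℝ) (i : N)
    (σ : ∀ i, List (∀ j, A j) → A i → ℝ) : ℝ :=
  ∑ f : Fin n → (∀ i, A i), histProb σ [] (List.ofFn f) * ((∑ t, u i (f t)) / n)

/-- Nash equilibrium of the `n`-stage repeated game (behavioral strategies,
average payoffs). -/
def IsRepNash (n : ℕ) (u : N → (∀ i, A i) → ℝ)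
    (σ : ∀ i, List (∀ j, A j) → A i → ℝ) : Prop :=
  (∀ i h, IsMixed (σ i h)) ∧
  ∀ i τ, (∀ h, IsMixed (τ h)) →
    avgPay n u i (Function.update σ i τ) ≤ avgPay n u i σ

/-- Shannon entropy (base 2) of a mixed strategy, with the convention 0·log 0 = 0. -/
noncomputable def ent {α : Type} [Fintype α] (σ : α → ℝ) : ℝ :=
  ∑ a, -(σ a * Real.logb 2 (σ a))

/-- Shannon entropy of a behavioral strategy of player `i` in the `n`-stage repeated
game: the maximum over terminal histories of the summed stage entropies along the
non-terminal prefixes. -/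
noncomputable def repEnt (n : ℕ) {i : N} (σi : List (∀ j, A j) → A i → ℝ) : ℝ :=
  Finset.univ.sup' Finset.univ_nonempty
    (fun f : Fin n → (∀ i, A i) => ∑ t : Fin n, ent (σi ((List.ofFn f).take t)))

/- ===== Auxiliary development for stmt_6 ===== -/

section Aux

lemma pureS_mixed {α : Type} [Fintype α] [DecidableEq α] (a : α) : IsMixed (pureS a) := by
  constructor
  · intro b; unfold pureS; split <;> norm_num
  · simp [pureS]

lemma prodSum_one {p : ∀ j, A j → ℝ} (hp : ∀ j, IsMixed (p j)) :
    ∑ a : ∀ j, A j, ∏ j, p j (a j) = 1 := by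
  rw [← Fintype.piFinset_univ, ← Finset.prod_univ_sum]
  simp only [(hp _).2, Finset.prod_const_one]

lemma prodNonneg {p : ∀ j, A j → ℝ} (hp : ∀ j, IsMixed (p j)) (a : ∀ j, A j) :
    0 ≤ ∏ j, p j (a j) :=
  Finset.prod_nonneg fun j _ => (hp j).1 _

lemma sum_weight {p : ∀ j, A j → ℝ} (hp : ∀ j, IsMixed (p j))
    (g : (∀ j, A j) → ℝ) (c : ℝ) :
    ∑ a : ∀ j, A j, (∏ j, p j (a j)) * (g a + c) = expU g p + c := by
  have h1 : ∑ a : ∀ j, A j, (∏ j, p j (a j)) * c = c := by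
    rw [← Finset.sum_mul, prodSum_one hp, one_mul]
  simp only [mul_add, Finset.sum_add_distrib, h1, expU]

/-- Total (non-averaged) payoff in the repeated game. -/
noncomputable def totPay (n : ℕ) (u : N → (∀ i, A i) → ℝ) (i : N)
    (σ : ∀ i, List (∀ j, A j) → A i → ℝ) : ℝ :=
  ∑ f : Fin n → (∀ i, A i), histProb σ [] (List.ofFn f) * (∑ t, u i (f t))

/-- Continuation behavioral profile after first-stage profile `a`. -/
def contS (σ : ∀ i, List (∀ j, A j) → A i → ℝ) (a : ∀ j, A j) :
    ∀ i, List (∀ j, A j) → A i → ℝ := fun i h => σ i (a :: h)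

lemma avgPay_eq (n : ℕ) (u : N → (∀ i, A i) → ℝ) (i : N)
    (σ : ∀ i, List (∀ j, A j) → A i → ℝ) :
    avgPay n u i σ = totPay n u i σ / n := by
  unfold avgPay totPay
  rw [Finset.sum_div]
  exact Finset.sum_congr rfl fun f _ => (mul_div_assoc _ _ _).symm

lemma totPay_zero (u : N → (∀ i, A i) → ℝ) (i : N)
    (σ : ∀ i, List (∀ j, A j) → A i → ℝ) : totPay 0 u i σ = 0 := by
  simp [totPay]

lemma histProb_shift (σ : ∀ i, List (∀ j, A j) → A i → ℝ) (a : ∀ j, A j) :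
    ∀ (l h : List (∀ j, A j)), histProb σ (a :: h) l = histProb (contS σ a) h l := by
  intro l
  induction l with
  | nil => intro h; rfl
  | cons b rest ih =>
    intro h
    show (∏ j, σ j (a :: h) (b j)) * histProb σ ((a :: h) ++ [b]) rest
        = (∏ j, contS σ a j h (b j)) * histProb (contS σ a) (h ++ [b]) rest
    rw [List.cons_append, ih (h ++ [b])]
    rfl

lemma ofFn_cons {n : ℕ} {α : Type*} (a : α) (g : Fin n → α) :
    List.ofFn (Fin.cons a g) = a :: List.ofFn g := by
  rw [List.ofFn_succ]
  simp

lemma sum_decomp (σ : ∀ i, List (∀ j, A j) → A i → ℝ) (n : ℕ)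
    (G : (Fin (n+1) → (∀ j, A j)) → ℝ) :
    ∑ f : Fin (n+1) → (∀ j, A j), histProb σ [] (List.ofFn f) * G f
      = ∑ a : ∀ j, A j, (∏ j, σ j [] (a j)) *
          ∑ g : Fin n → (∀ j, A j),
            histProb (contS σ a) [] (List.ofFn g) * G (Fin.cons a g) := by
  rw [← Equiv.sum_comp (Fin.consEquiv (fun _ : Fin (n+1) => ∀ j, A j))
    (fun f => histProb σ [] (List.ofFn f) * G f)]
  rw [Fintype.sum_prod_type]
  refine Finset.sum_congr rfl fun a _ => ?_
  rw [Finset.mul_sum]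
  refine Finset.sum_congr rfl fun g _ => ?_
  have hc : (Fin.consEquiv (fun _ : Fin (n+1) => ∀ j, A j)) (a, g) = Fin.cons a g := rfl
  rw [hc, ofFn_cons]
  have h1 : histProb σ [] (a :: List.ofFn g)
      = (∏ j, σ j [] (a j)) * histProb (contS σ a) [] (List.ofFn g) := by
    show (∏ j, σ j [] (a j)) * histProb σ ([] ++ [a]) (List.ofFn g) = _
    rw [List.nil_append]
    rw [show ([a] : List (∀ j, A j)) = a :: [] from rfl, histProb_shift]
  rw [h1]; ring

lemma histSum : ∀ (n : ℕ) (σ : ∀ i, List (∀ j, A j) → A i → ℝ),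
    (∀ j h, IsMixed (σ j h)) →
    ∑ f : Fin n → (∀ j, A j), histProb σ [] (List.ofFn f) = 1 := by
  intro n
  induction n with
  | zero =>
    intro σ _
    rw [Finset.sum_congr rfl (fun f _ => show histProb σ [] (List.ofFn f) = 1 by
      rw [List.ofFn_zero]; rfl)]
    simp
  | succ n ih =>
    intro σ hmix
    have h0 : ∑ f : Fin (n+1) → (∀ j, A j), histProb σ [] (List.ofFn f)
        = ∑ f : Fin (n+1) → (∀ j, A j), histProb σ [] (List.ofFn f) * (fun _ => (1:ℝ)) f := by
      simp
    rw [h0, sum_decomp]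
    have h1 : ∀ a : ∀ j, A j,
        ∑ g : Fin n → (∀ j, A j), histProb (contS σ a) [] (List.ofFn g) * (1:ℝ) = 1 := by
      intro a
      simpa using ih (contS σ a) (fun j h => hmix j _)
    rw [Finset.sum_congr rfl fun a _ => by rw [h1 a, mul_one]]
    exact prodSum_one (fun j => hmix j [])

lemma totPay_succ {n : ℕ} {u : N → (∀ i, A i) → ℝ} {i : N}
    {σ : ∀ i, List (∀ j, A j) → A i → ℝ} (hmix : ∀ j h, IsMixed (σ j h)) :
    totPay (n+1) u i σ
      = ∑ a : ∀ j, A j, (∏ j, σ j [] (a j)) * (u i a + totPay n u i (contS σ a)) := by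
  unfold totPay
  rw [sum_decomp]
  refine Finset.sum_congr rfl fun a _ => ?_
  congr 1
  have h1 : ∀ g : Fin n → (∀ j, A j),
      (∑ t : Fin (n+1), u i (Fin.cons (α := fun _ => ∀ j, A j) a g t)) = u i a + ∑ t : Fin n, u i (g t) := by
    intro g; rw [Fin.sum_univ_succ]; simp
  rw [Finset.sum_congr rfl fun g _ => by rw [h1 g]]
  rw [Finset.sum_congr rfl fun g _ =>
    (mul_add (histProb (contS σ a) [] (List.ofFn g)) (u i a) _)]
  rw [Finset.sum_add_distrib, ← Finset.sum_mul, histSum n (contS σ a) (fun j h => hmix j _)]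
  simp [totPay]

lemma stage_update (σ : ∀ i, List (∀ j, A j) → A i → ℝ) (i : N)
    (τ : List (∀ j, A j) → A i → ℝ) (h : List (∀ j, A j)) :
    (fun j => Function.update σ i τ j h) = Function.update (fun j => σ j h) i (τ h) := by
  funext j
  by_cases hj : j = i
  · subst hj; simp
  · simp [Function.update_of_ne hj]

lemma contS_update (σ : ∀ i, List (∀ j, A j) → A i → ℝ) (i : N)
    (τ : List (∀ j, A j) → A i → ℝ) (a : ∀ j, A j) :
    contS (Function.update σ i τ) a
      = Function.update (contS σ a) i (fun h => τ (a :: h)) := by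
  funext j h
  by_cases hj : j = i
  · subst hj
    show Function.update σ j τ j (a :: h)
      = Function.update (contS σ a) j (fun h => τ (a :: h)) j h
    rw [Function.update_self, Function.update_self]
  · show Function.update σ i τ j (a :: h)
      = Function.update (contS σ a) i (fun h => τ (a :: h)) j h
    rw [Function.update_of_ne hj, Function.update_of_ne hj]
    rfl

/-- A pure myopic best-response action against mixed profile `p`. -/
noncomputable def brAct (u : N → (∀ i, A i) → ℝ) (i : N) (p : ∀ j, A j → ℝ) : A i :=
  (Finset.exists_mem_eq_sup' Finset.univ_nonempty
    (fun a : A i => expU (u i) (Function.update p i (pureS a)))).choose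

lemma brAct_spec (u : N → (∀ i, A i) → ℝ) (i : N) (p : ∀ j, A j → ℝ) :
    Finset.univ.sup' Finset.univ_nonempty
        (fun a : A i => expU (u i) (Function.update p i (pureS a)))
      = expU (u i) (Function.update p i (pureS (brAct u i p))) :=
  (Finset.exists_mem_eq_sup' Finset.univ_nonempty
    (fun a : A i => expU (u i) (Function.update p i (pureS a)))).choose_spec.2

lemma brAct_ge {u : N → (∀ i, A i) → ℝ} {i : N} {vi : ℝ}
    (hvi : IsMinmaxVal u i vi) (p : ∀ j, A j → ℝ) (hp : ∀ j, IsMixed (p j)) :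
    vi ≤ expU (u i) (Function.update p i (pureS (brAct u i p))) := by
  rw [← brAct_spec]
  exact hvi.2 ⟨p, hp, rfl⟩

/-- Myopic best-response behavioral deviation. -/
noncomputable def myopicDev (u : N → (∀ i, A i) → ℝ) (i : N)
    (σ : ∀ i, List (∀ j, A j) → A i → ℝ) : List (∀ j, A j) → A i → ℝ :=
  fun h => pureS (brAct u i (fun j => σ j h))

lemma secure {u : N → (∀ i, A i) → ℝ} {i : N} {vi : ℝ} (hvi : IsMinmaxVal u i vi) :
    ∀ (n : ℕ) (σ : ∀ i, List (∀ j, A j) → A i → ℝ), (∀ j h, IsMixed (σ j h)) →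
      (n : ℝ) * vi ≤ totPay n u i (Function.update σ i (myopicDev u i σ)) := by
  intro n
  induction n with
  | zero => intro σ _; simp [totPay_zero]
  | succ n ih =>
    intro σ hmix
    have hmix' : ∀ j h, IsMixed (Function.update σ i (myopicDev u i σ) j h) := by
      intro j h
      by_cases hj : j = i
      · subst hj; simp only [Function.update_self]; exact pureS_mixed _
      · rw [Function.update_of_ne hj]; exact hmix j h
    rw [totPay_succ hmix']
    have hcont : ∀ a : ∀ j, A j,
        contS (Function.update σ i (myopicDev u i σ)) a
          = Function.update (contS σ a) i (myopicDev u i (contS σ a)) := by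
      intro a
      rw [contS_update]
      rfl
    have key : ∀ a : ∀ j, A j,
        (n : ℝ) * vi ≤ totPay n u i (contS (Function.update σ i (myopicDev u i σ)) a) := by
      intro a
      rw [hcont a]
      exact ih (contS σ a) (fun j h => hmix j _)
    have step : ∑ a : ∀ j, A j,
          (∏ j, Function.update σ i (myopicDev u i σ) j [] (a j)) * (u i a + (n:ℝ) * vi)
        ≤ ∑ a : ∀ j, A j, (∏ j, Function.update σ i (myopicDev u i σ) j [] (a j)) *
            (u i a + totPay n u i (contS (Function.update σ i (myopicDev u i σ)) a)) := by
      refine Finset.sum_le_sum fun a _ => ?_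
      exact mul_le_mul_of_nonneg_left (by linarith [key a])
        (prodNonneg (fun j => hmix' j []) a)
    refine le_trans ?_ step
    rw [sum_weight (fun j => hmix' j []) (u i) ((n:ℝ) * vi)]
    have hstage : (fun j => Function.update σ i (myopicDev u i σ) j [])
        = Function.update (fun j => σ j []) i (pureS (brAct u i (fun j => σ j []))) := by
      rw [stage_update]
      rfl
    rw [hstage]
    have := brAct_ge hvi (fun j => σ j []) (fun j => hmix j [])
    push_cast
    linarith

lemma repNash_totPay {n : ℕ} {u : N → (∀ i, A i) → ℝ}
    {σ : ∀ i, List (∀ j, A j) → A i → ℝ} (hσ : IsRepNash n u σ)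
    {i : N} {τ : List (∀ j, A j) → A i → ℝ} (hτ : ∀ h, IsMixed (τ h)) :
    totPay n u i (Function.update σ i τ) ≤ totPay n u i σ := by
  have h := hσ.2 i τ hτ
  rw [avgPay_eq, avgPay_eq] at h
  rcases Nat.eq_zero_or_pos n with hn | hn
  · subst hn; simp [totPay_zero]
  · have hc : (0:ℝ) < n := by exact_mod_cast hn
    exact (div_le_div_iff_of_pos_right hc).mp h

/-- Continuation of a repeated-game equilibrium after a positive-probability
first-stage profile is itself an equilibrium of the shorter repeated game. -/
lemma contNash {n : ℕ} {u : N → (∀ i, A i) → ℝ}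
    {σ : ∀ i, List (∀ j, A j) → A i → ℝ} (hσ : IsRepNash (n+1) u σ)
    (a : ∀ j, A j) (ha : 0 < ∏ j, σ j [] (a j)) : IsRepNash n u (contS σ a) := by
  classical
  constructor
  · intro j h; exact hσ.1 j _
  · intro i τ hτ
    set τ' : List (∀ j, A j) → A i → ℝ :=
      fun h => match h with
        | [] => σ i []
        | b :: h' => if b = a then τ h' else σ i (b :: h') with hτ'def
    have hτ'nil : τ' [] = σ i [] := rfl
    have hτ'a : (fun h => τ' (a :: h)) = τ := by
      funext h; simp [hτ'def]
    have hτ'b : ∀ b, b ≠ a → (fun h => τ' (b :: h)) = fun h => σ i (b :: h) := by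
      intro b hb; funext h; simp [hτ'def, hb]
    have hτ'mix : ∀ h, IsMixed (τ' h) := by
      intro h
      match h with
      | [] => exact hσ.1 i []
      | b :: h' =>
        by_cases hb : b = a
        · simpa [hτ'def, hb] using hτ h'
        · simpa [hτ'def, hb] using hσ.1 i (b :: h')
    have hmixU : ∀ j h, IsMixed (Function.update σ i τ' j h) := by
      intro j h
      by_cases hj : j = i
      · subst hj; simp only [Function.update_self]; exact hτ'mix h
      · rw [Function.update_of_ne hj]; exact hσ.1 j h
    have hstage : (fun j => Function.update σ i τ' j []) = fun j => σ j [] := by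
      rw [stage_update, hτ'nil, Function.update_eq_self]
    have hcont : ∀ a' : ∀ j, A j,
        contS (Function.update σ i τ') a'
          = if a' = a then Function.update (contS σ a) i τ else contS σ a' := by
      intro a'
      rw [contS_update]
      by_cases hb : a' = a
      · subst hb; rw [if_pos rfl, hτ'a]
      · rw [if_neg hb, hτ'b a' hb]
        exact Function.update_eq_self _ _
    have htot := repNash_totPay hσ hτ'mix
    rw [totPay_succ hmixU, totPay_succ hσ.1] at htot
    have hprod : ∀ a' : (∀ j, A j), (∏ j, Function.update σ i τ' j [] (a' j)) = ∏ j, σ j [] (a' j) := by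
      intro a'
      exact Finset.prod_congr rfl fun j _ => by rw [congrFun hstage j]
    set TU := totPay n u i (Function.update (contS σ a) i τ) with hTUdef
    have hL : ∀ a' : (∀ j, A j),
        (∏ j, Function.update σ i τ' j [] (a' j)) *
          (u i a' + totPay n u i (contS (Function.update σ i τ') a'))
        = (∏ j, σ j [] (a' j)) * (u i a' + totPay n u i (contS σ a'))
          + (if a' = a then (∏ j, σ j [] (a j)) * (TU - totPay n u i (contS σ a)) else 0) := by
      intro a'
      rw [hprod a', hcont a']
      by_cases hb : a' = a
      · subst hb; rw [if_pos rfl, if_pos rfl]; ring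
      · rw [if_neg hb, if_neg hb, add_zero]
    rw [Finset.sum_congr rfl (fun a' _ => hL a'), Finset.sum_add_distrib,
      Finset.sum_ite_eq' Finset.univ a, if_pos (Finset.mem_univ a)] at htot
    have hD : (∏ j, σ j [] (a j)) * (TU - totPay n u i (contS σ a)) ≤ 0 := by linarith
    have htot' : TU ≤ totPay n u i (contS σ a) := by nlinarith
    rw [avgPay_eq, avgPay_eq]
    rcases Nat.eq_zero_or_pos n with hn | hn
    · subst hn; simp [totPay_zero]
    · rw [hTUdef] at htot'
      exact (div_le_div_iff_of_pos_right (by exact_mod_cast hn)).mpr htot'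

end Aux

lemma stageNash {u : N → (∀ i, A i) → ℝ} {v : N → ℝ}
    (hv : ∀ i, IsMinmaxVal u i (v i)) {n : ℕ}
    {σ : ∀ i, List (∀ j, A j) → A i → ℝ} (hσ : IsRepNash (n+1) u σ)
    (hcont : ∀ a : ∀ j, A j, 0 < ∏ j, σ j [] (a j) →
      ∀ j, totPay n u j (contS σ a) = (n : ℝ) * v j) :
    IsNash u (fun j => σ j []) := by
  classical
  refine ⟨fun j => hσ.1 j [], ?_⟩
  intro j τ hτ
  set τs : List (∀ j, A j) → A j → ℝ :=
    fun h => match h with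
      | [] => τ
      | b :: h' => myopicDev u j σ (b :: h') with hτs
  have hτsnil : τs [] = τ := rfl
  have hτsmix : ∀ h, IsMixed (τs h) := by
    intro h
    match h with
    | [] => exact hτ
    | b :: h' => exact pureS_mixed _
  have hmixU : ∀ j' h, IsMixed (Function.update σ j τs j' h) := by
    intro j' h
    by_cases hj : j' = j
    · subst hj; simp only [Function.update_self]; exact hτsmix h
    · rw [Function.update_of_ne hj]; exact hσ.1 j' h
  have htot := repNash_totPay hσ hτsmix
  rw [totPay_succ hmixU, totPay_succ hσ.1] at htot
  have hR : ∑ a : ∀ j, A j, (∏ j', σ j' [] (a j')) * (u j a + totPay n u j (contS σ a))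
      = expU (u j) (fun j' => σ j' []) + (n:ℝ) * v j := by
    have hterm : ∀ a ∈ (Finset.univ : Finset (∀ j, A j)),
        (∏ j', σ j' [] (a j')) * (u j a + totPay n u j (contS σ a))
          = (∏ j', σ j' [] (a j')) * (u j a + (n:ℝ) * v j) := by
      intro a _
      rcases eq_or_lt_of_le (prodNonneg (fun j' => hσ.1 j' []) a) with h0' | h0'
      · rw [← h0', zero_mul, zero_mul]
      · rw [hcont a h0' j]
    rw [Finset.sum_congr rfl hterm, sum_weight (fun j' => hσ.1 j' []) (u j) _]
  have hQmix : ∀ j', IsMixed (Function.update σ j τs j' []) := fun j' => hmixU j' []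
  have hLcont : ∀ a : (∀ j, A j), contS (Function.update σ j τs) a
      = Function.update (contS σ a) j (myopicDev u j (contS σ a)) := by
    intro a
    rw [contS_update]
    rfl
  have hLB : ∀ a : (∀ j, A j),
      (n:ℝ) * v j ≤ totPay n u j (contS (Function.update σ j τs) a) := by
    intro a
    rw [hLcont a]
    exact secure (hv j) n (contS σ a) (fun j' h => hσ.1 j' _)
  have mono : ∑ a : ∀ j, A j, (∏ j', Function.update σ j τs j' [] (a j')) * (u j a + (n:ℝ) * v j)
      ≤ ∑ a : ∀ j, A j, (∏ j', Function.update σ j τs j' [] (a j')) *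
          (u j a + totPay n u j (contS (Function.update σ j τs) a)) := by
    refine Finset.sum_le_sum fun a _ => ?_
    exact mul_le_mul_of_nonneg_left (by linarith [hLB a]) (prodNonneg hQmix a)
  have hstage : (fun j' => Function.update σ j τs j' [])
      = Function.update (fun j' => σ j' []) j τ := by
    rw [stage_update]
  have base : ∑ a : ∀ j, A j, (∏ j', Function.update σ j τs j' [] (a j')) * (u j a + (n:ℝ) * v j)
      = expU (u j) (Function.update (fun j' => σ j' []) j τ) + (n:ℝ) * v j := by
    rw [sum_weight hQmix (u j) _, hstage]
  linarith

lemma payoff_eq {u : N → (∀ i, A i) → ℝ} {v : N → ℝ}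
    (hv : ∀ i, IsMinmaxVal u i (v i))
    (hpay : ∀ σ, IsNash u σ → ∀ j, expU (u j) σ = v j) :
    ∀ (n : ℕ) (σ : ∀ i, List (∀ j, A j) → A i → ℝ), IsRepNash n u σ →
      ∀ j, totPay n u j σ = (n : ℝ) * v j := by
  intro n
  induction n with
  | zero => intro σ _ j; simp [totPay_zero]
  | succ n ih =>
    intro σ hσ
    have hcont : ∀ a : ∀ j, A j, 0 < ∏ j, σ j [] (a j) →
        ∀ j, totPay n u j (contS σ a) = (n:ℝ) * v j :=
      fun a ha => ih (contS σ a) (contNash hσ a ha)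
    have h0 : IsNash u (fun j => σ j []) := stageNash hv hσ hcont
    intro j
    rw [totPay_succ hσ.1]
    have hterm : ∀ a ∈ (Finset.univ : Finset (∀ j, A j)),
        (∏ j', σ j' [] (a j')) * (u j a + totPay n u j (contS σ a))
          = (∏ j', σ j' [] (a j')) * (u j a + (n:ℝ) * v j) := by
      intro a _
      rcases eq_or_lt_of_le (prodNonneg (fun j' => hσ.1 j' []) a) with h0' | h0'
      · rw [← h0', zero_mul, zero_mul]
      · rw [hcont a h0' j]
    rw [Finset.sum_congr rfl hterm, sum_weight (fun j' => hσ.1 j' []) (u j), hpay _ h0 j]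
    push_cast
    ring

lemma repEnt_zero {i : N} (σi : List (∀ j, A j) → A i → ℝ) : repEnt 0 σi = 0 := by
  have h0 : (fun f : Fin 0 → (∀ i, A i) => ∑ t : Fin 0, ent (σi ((List.ofFn f).take t)))
      = fun _ => (0:ℝ) := funext fun f => by simp
  rw [repEnt, h0]
  exact Finset.sup'_const _ _

lemma repEnt_cons {n : ℕ} {i : N} (σi : List (∀ j, A j) → A i → ℝ) (a : ∀ j, A j) :
    ent (σi []) + repEnt n (fun h => σi (a :: h)) ≤ repEnt (n+1) σi := by
  obtain ⟨g, -, hg⟩ := Finset.exists_mem_eq_sup' (Finset.univ_nonempty)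
    (fun f : Fin n → (∀ i, A i) =>
      ∑ t : Fin n, ent ((fun h => σi (a :: h)) ((List.ofFn f).take t)))
  have h1 : repEnt n (fun h => σi (a :: h))
      = ∑ t : Fin n, ent (σi (a :: (List.ofFn g).take t)) := by
    rw [repEnt, hg]
  have h2 : ∑ t : Fin (n+1), ent (σi ((List.ofFn (Fin.cons (α := fun _ => ∀ i, A i) a g)).take t))
      = ent (σi []) + ∑ t : Fin n, ent (σi (a :: (List.ofFn g).take t)) := by
    rw [Fin.sum_univ_succ, ofFn_cons]
    congr 1
  rw [h1, ← h2, repEnt]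
  exact Finset.le_sup'
    (fun f : Fin (n+1) → (∀ i, A i) => ∑ t : Fin (n+1), ent (σi ((List.ofFn f).take t)))
    (Finset.mem_univ (Fin.cons (α := fun _ => ∀ i, A i) a g))

lemma entMain {u : N → (∀ i, A i) → ℝ} {v : N → ℝ}
    (hv : ∀ i, IsMinmaxVal u i (v i))
    (hpay : ∀ σ, IsNash u σ → ∀ j, expU (u j) σ = v j)
    {i : N} {βi : ℝ} (hβ : ∀ σ, IsNash u σ → βi ≤ ent (σ i)) :
    ∀ (n : ℕ) (σ : ∀ i, List (∀ j, A j) → A i → ℝ), IsRepNash n u σ →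
      (n : ℝ) * βi ≤ repEnt n (σ i) := by
  intro n
  induction n with
  | zero => intro σ _; simp [repEnt_zero]
  | succ n ih =>
    intro σ hσ
    have hcont : ∀ a : ∀ j, A j, 0 < ∏ j, σ j [] (a j) →
        ∀ j, totPay n u j (contS σ a) = (n:ℝ) * v j :=
      fun a ha => payoff_eq hv hpay n (contS σ a) (contNash hσ a ha)
    have h0 : IsNash u (fun j => σ j []) := stageNash hv hσ hcont
    have hb0 : βi ≤ ent (σ i []) := hβ _ h0
    obtain ⟨a, -, ha⟩ := Finset.exists_ne_zero_of_sum_ne_zero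
      (s := (Finset.univ : Finset (∀ j, A j))) (f := fun a => ∏ j, σ j [] (a j))
      (by rw [prodSum_one (fun j => hσ.1 j [])]; exact one_ne_zero)
    have hapos : 0 < ∏ j, σ j [] (a j) :=
      lt_of_le_of_ne (prodNonneg (fun j => hσ.1 j []) a) (Ne.symm ha)
    have hrec : (n:ℝ) * βi ≤ repEnt n (fun h => σ i (a :: h)) :=
      ih (contS σ a) (contNash hσ a hapos)
    have hcons := repEnt_cons (n := n) (σ i) a
    push_cast
    calc ((n:ℝ) + 1) * βi = βi + (n:ℝ) * βi := by ring
    _ ≤ ent (σ i []) + repEnt n (fun h => σ i (a :: h)) := add_le_add hb0 hrec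
    _ ≤ repEnt (n+1) (σ i) := hcons

theorem stmt_6 (u : N → (∀ i, A i) → ℝ) (v : N → ℝ)
    (hv : ∀ i, IsMinmaxVal u i (v i))
    -- every Nash equilibrium payoff profile of the stage game equals the minmax profile
    (hpay : ∀ σ, IsNash u σ → ∀ j, expU (u j) σ = v j)
    (i : N) (βi : ℝ)
    -- in every Nash equilibrium of the stage game, player i's strategy has entropy ≥ βᵢ
    (hβ : ∀ σ, IsNash u σ → βi ≤ ent (σ i))
    (n : ℕ) (σ : ∀ i, List (∀ j, A j) → A i → ℝ)
    (hσ : IsRepNash n u σ) :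
    (n : ℝ) * βi ≤ repEnt n (σ i) := entMain hv hpay hβ n σ hσ
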